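/- In the q-deformed Heisenberg algebra, for pairwise distinct k_1,...,k_n and ℓ_1,...,ℓ_n, the identity a(k_1)···a(k_n) a†(ℓ_n)···a†(ℓ_1)|0⟩ = Σ_{σ∈S_n} q^{I(σ)} δ_{k_1 ℓ_{σ(1)}} ··· δ_{k_n ℓ_{σ(n)}} |0⟩ holds. -/

import Mathlib

/-- The inversion number of a permutation. -/
def inversions {n : ℕ} (σ : Equiv.Perm (Fin n)) : ℕ :=
  (Finset.univ.filter fun p : Fin n × Fin n => p.1 < p.2 ∧ σ p.2 < σ p.1).card

open Finset

/-- Glue a value at the last position with a permutation of the rest. -/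
def glue {n : ℕ} (j : Fin (n + 1)) (τ : Equiv.Perm (Fin n)) : Equiv.Perm (Fin (n + 1)) :=
  finSuccEquivLast.trans ((Equiv.optionCongr τ).trans (finSuccEquiv' j).symm)

lemma glue_castSucc {n : ℕ} (j : Fin (n + 1)) (τ : Equiv.Perm (Fin n)) (i : Fin n) :
    glue j τ (Fin.castSucc i) = j.succAbove (τ i) := by
  simp [glue, finSuccEquivLast_castSucc, finSuccEquiv'_symm_some]

lemma glue_last {n : ℕ} (j : Fin (n + 1)) (τ : Equiv.Perm (Fin n)) :
    glue j τ (Fin.last n) = j := by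
  simp [glue, finSuccEquivLast_last, finSuccEquiv'_symm_none]

lemma glue_bijective {n : ℕ} :
    Function.Bijective (fun p : Fin (n + 1) × Equiv.Perm (Fin n) => glue p.1 p.2) := by
  constructor
  · rintro ⟨j, τ⟩ ⟨j', τ'⟩ h
    simp only at h
    have hj : j = j' := by
      have := congrArg (fun e : Equiv.Perm (Fin (n + 1)) => e (Fin.last n)) h
      simpa [glue_last] using this
    subst hj
    have hτ : τ = τ' := by
      apply Equiv.ext
      intro i
      have := congrArg (fun e : Equiv.Perm (Fin (n + 1)) => e (Fin.castSucc i)) h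
      simp only [glue_castSucc] at this
      exact Fin.succAbove_right_injective this
    simp [hτ]
  · intro σ
    set j := σ (Fin.last n) with hj
    set e : Option (Fin n) ≃ Option (Fin n) :=
      finSuccEquivLast.symm.trans (σ.trans (finSuccEquiv' j)) with he
    have hsome : ∀ i : Fin n, e (some i) = some (Equiv.removeNone e i) := by
      intro i
      have h1 : e (some i) = finSuccEquiv' j (σ (Fin.castSucc i)) := by
        simp [he, finSuccEquivLast_symm_some]
      have h2 : σ (Fin.castSucc i) ≠ j := by
        intro hcon
        exact absurd (σ.injective hcon) (Fin.ne_of_lt (Fin.castSucc_lt_last i))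
      have h3 : finSuccEquiv' j (σ (Fin.castSucc i)) ≠ none := by
        intro hcon
        apply h2
        have := congrArg (finSuccEquiv' j).symm hcon
        simpa [finSuccEquiv'_symm_none] using this
      obtain ⟨y, hy⟩ := Option.ne_none_iff_exists'.mp (h1 ▸ h3)
      rw [Equiv.removeNone_some e ⟨y, hy⟩]
    refine ⟨⟨j, Equiv.removeNone e⟩, ?_⟩
    apply Equiv.ext
    intro x
    induction x using Fin.lastCases with
    | last => simp [glue_last]; exact hj
    | cast i =>
      simp only [glue_castSucc]
      have h1 : (some ((Equiv.removeNone e) i) : Option (Fin n)) = e (some i) :=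
        (hsome i).symm
      have h2 : e (some i) = finSuccEquiv' j (σ (Fin.castSucc i)) := by
        simp [he, finSuccEquivLast_symm_some]
      have h3 := congrArg (finSuccEquiv' j).symm (h1.trans h2)
      simpa [finSuccEquiv'_symm_some] using h3

lemma inversions_eq_sum {m : ℕ} (σ : Equiv.Perm (Fin m)) :
    inversions σ = ∑ v : Fin m, (univ.filter fun u => u < v ∧ σ v < σ u).card := by
  classical
  simp only [inversions, Finset.card_filter]
  rw [← Finset.univ_product_univ, Finset.sum_product]
  exact Finset.sum_comm

lemma lt_succAbove_iff' {n : ℕ} (j : Fin (n + 1)) (t : Fin n) :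
    j < j.succAbove t ↔ (j : ℕ) ≤ (t : ℕ) := by
  simp only [Fin.succAbove]
  split_ifs with h <;>
    simp_all [Fin.lt_def, Fin.le_def, Fin.coe_castSucc, Fin.val_succ] <;> omega

lemma count_ge {n : ℕ} (j : Fin (n + 1)) :
    (univ.filter fun t : Fin n => (j : ℕ) ≤ (t : ℕ)).card = n - j := by
  rw [Finset.card_filter, Fin.sum_univ_eq_sum_range (fun i => if (j : ℕ) ≤ i then 1 else 0) n,
    ← Finset.card_filter, Finset.range_eq_Ico, Finset.Ico_filter_le]
  simp [Nat.card_Ico]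

lemma count_last {n : ℕ} (j : Fin (n + 1)) (τ : Equiv.Perm (Fin n)) :
    (univ.filter fun u : Fin (n + 1) =>
      u < Fin.last n ∧ glue j τ (Fin.last n) < glue j τ u).card = n - j := by
  rw [← count_ge j]
  refine Finset.card_bij' (fun u hu => τ (Fin.castPred u (by
      simp only [Finset.mem_filter] at hu
      exact Fin.ne_of_lt hu.2.1)))
    (fun t ht => Fin.castSucc (τ.symm t)) ?_ ?_ ?_ ?_
  · intro u hu
    simp only [Finset.mem_filter, Finset.mem_univ, true_and] at hu ⊢
    obtain ⟨h1, h2⟩ := hu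
    rw [glue_last] at h2
    have : u = Fin.castSucc (Fin.castPred u (Fin.ne_of_lt h1)) := by simp
    rw [this, glue_castSucc] at h2
    rw [← lt_succAbove_iff' j]
    simpa using h2
  · intro t ht
    simp only [Finset.mem_filter, Finset.mem_univ, true_and] at ht ⊢
    constructor
    · exact Fin.castSucc_lt_last _
    · rw [glue_last, glue_castSucc, Equiv.apply_symm_apply, lt_succAbove_iff' j]
      exact ht
  · intro u hu
    simp only [Finset.mem_filter] at hu
    simp
  · intro t ht
    simp only [Finset.mem_filter, Finset.mem_univ, true_and] at ht
    simp

lemma count_mid {n : ℕ} (j : Fin (n + 1)) (τ : Equiv.Perm (Fin n)) (b : Fin n) :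
    (univ.filter fun u : Fin (n + 1) =>
      u < Fin.castSucc b ∧ glue j τ (Fin.castSucc b) < glue j τ u).card
    = (univ.filter fun a : Fin n => a < b ∧ τ b < τ a).card := by
  refine Finset.card_bij' (fun u hu => Fin.castPred u (by
      simp only [Finset.mem_filter] at hu
      exact Fin.ne_of_lt (lt_trans hu.2.1 (Fin.castSucc_lt_last b))))
    (fun a ha => Fin.castSucc a) ?_ ?_ ?_ ?_
  · intro u hu
    simp only [Finset.mem_filter, Finset.mem_univ, true_and] at hu ⊢
    obtain ⟨h1, h2⟩ := hu
    have hne : u ≠ Fin.last n := Fin.ne_of_lt (lt_trans h1 (Fin.castSucc_lt_last b))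
    have hu' : u = Fin.castSucc (Fin.castPred u hne) := by simp
    constructor
    · rw [hu'] at h1
      exact Fin.castSucc_lt_castSucc_iff.mp h1
    · rw [hu', glue_castSucc, glue_castSucc] at h2
      exact Fin.succAbove_lt_succAbove_iff.mp h2
  · intro a ha
    simp only [Finset.mem_filter, Finset.mem_univ, true_and] at ha ⊢
    refine ⟨Fin.castSucc_lt_castSucc_iff.mpr ha.1, ?_⟩
    rw [glue_castSucc, glue_castSucc]
    exact Fin.succAbove_lt_succAbove_iff.mpr ha.2
  · intro u hu; simp
  · intro a ha; simp

lemma inversions_glue {n : ℕ} (j : Fin (n + 1)) (τ : Equiv.Perm (Fin n)) :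
    inversions (glue j τ) = (n - j) + inversions τ := by
  rw [inversions_eq_sum, Fin.sum_univ_castSucc, count_last, inversions_eq_sum τ]
  rw [Nat.add_comm]
  congr 1
  exact Finset.sum_congr rfl fun b _ => count_mid j τ b

section Algebra

variable {V ι : Type*} [AddCommGroup V] [Module ℝ V] [DecidableEq ι]

lemma aux_a (q : ℝ) (a ad : ι → Module.End ℝ V)
    (hrel : ∀ k l, a k * ad l = (if k = l then 1 else 0) + q • (ad l * a k))
    (vac : V) (hvac : ∀ k, a k vac = 0) :
    ∀ (m : ℕ) (L : Fin (m + 1) → ι) (kk : ι),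
      a kk (((List.ofFn fun i => ad (L i)).reverse).prod vac)
        = ∑ j : Fin (m + 1), (if kk = L j then q ^ (m - (j : ℕ)) else 0) •
            (((List.ofFn fun i => ad (L (j.succAbove i))).reverse).prod vac) := by
  have hsplit : ∀ (m : ℕ) (F : Fin (m + 1) → ι),
      ((List.ofFn fun i => ad (F i)).reverse).prod
        = ad (F (Fin.last m)) * ((List.ofFn fun i => ad (F (Fin.castSucc i))).reverse).prod := by
    intro m F
    rw [List.ofFn_succ', List.concat_eq_append, List.reverse_append,
      List.reverse_singleton, List.singleton_append, List.prod_cons]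
  intro m
  induction m with
  | zero =>
    intro L kk
    rw [hsplit 0 L, Module.End.mul_apply, ← Module.End.mul_apply (a kk), hrel]
    simp only [List.ofFn_zero, List.reverse_nil, List.prod_nil, Fin.sum_univ_one]
    simp only [LinearMap.add_apply, LinearMap.smul_apply, Module.End.mul_apply,
      Module.End.one_apply, hvac, map_zero, smul_zero, add_zero, pow_zero, Fin.last_zero]
    split_ifs <;> simp_all
  | succ m ih =>
    intro L kk
    rw [hsplit (m + 1) L, Module.End.mul_apply, ← Module.End.mul_apply (a kk), hrel,
      LinearMap.add_apply, LinearMap.smul_apply, Module.End.mul_apply,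
      ih (fun i => L (Fin.castSucc i)) kk, map_sum, Finset.smul_sum, add_comm]
    conv_rhs => rw [Fin.sum_univ_castSucc]
    congr 1
    · apply Finset.sum_congr rfl
      intro j _
      rw [map_smul, smul_smul]
      have hpow : q * (if kk = L (Fin.castSucc j) then q ^ (m - (j : ℕ)) else 0)
          = (if kk = L (Fin.castSucc j) then q ^ (m + 1 - ((Fin.castSucc j) : ℕ)) else 0) := by
        simp only [Fin.coe_castSucc, mul_ite, mul_zero]
        congr 1
        rw [← pow_succ']
        congr 1
        omega
      rw [hpow]
      congr 1
      have hfun : (((List.ofFn fun i => ad (L ((Fin.castSucc j).succAbove i))).reverse).prod : Module.End ℝ V)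
          = ad (L (Fin.last (m + 1))) *
            ((List.ofFn fun i => ad (L (Fin.castSucc (j.succAbove i)))).reverse).prod := by
        rw [hsplit m (fun i => L ((Fin.castSucc j).succAbove i))]
        congr 1
        · congr 1
          rw [Fin.succAbove_castSucc_of_le j (Fin.last m) (Fin.le_last j), Fin.succ_last]
        · exact congrArg List.prod (congrArg List.reverse (congrArg List.ofFn
            (funext fun i => by rw [Fin.castSucc_succAbove_castSucc])))
      rw [hfun, Module.End.mul_apply]
    · simp only [Fin.val_last, Nat.sub_self, pow_zero, Fin.succAbove_last]
      split_ifs with h <;> simp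
end Algebra

/-- In the q-deformed Heisenberg algebra (operators on a Fock space `V` with vacuum `vac`,
satisfying `a(k)a†(ℓ) = δ_{kℓ} + q a†(ℓ)a(k)` and `a(k)|0⟩ = 0`), for pairwise distinct
`k_1,…,k_n` and pairwise distinct `ℓ_1,…,ℓ_n` one has
`a(k_1)⋯a(k_n) a†(ℓ_n)⋯a†(ℓ_1)|0⟩ = Σ_{σ∈S_n} q^{I(σ)} δ_{k_1 ℓ_{σ(1)}} ⋯ δ_{k_n ℓ_{σ(n)}} |0⟩`. -/
theorem fock_contraction {V ι : Type*} [AddCommGroup V] [Module ℝ V]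
    [DecidableEq ι] (q : ℝ)
    (a ad : ι → Module.End ℝ V)
    (hrel : ∀ k l, a k * ad l = (if k = l then 1 else 0) + q • (ad l * a k))
    (vac : V) (hvac : ∀ k, a k vac = 0)
    (n : ℕ) (k l : Fin n → ι) (hk : Function.Injective k) (hl : Function.Injective l) :
    (((List.ofFn fun i => a (k i)).prod *
      ((List.ofFn fun i => ad (l i)).reverse).prod) vac)
      = (∑ σ : Equiv.Perm (Fin n),
          q ^ inversions σ * ∏ i, (if k i = l (σ i) then (1 : ℝ) else 0)) • vac := by
  clear hk hl
  induction n with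
  | zero =>
    simp [inversions, List.ofFn_zero]
  | succ n ih =>
    have hsplitA : (List.ofFn fun i : Fin (n + 1) => a (k i)).prod
        = (List.ofFn fun i : Fin n => a (k (Fin.castSucc i))).prod * a (k (Fin.last n)) := by
      rw [List.ofFn_succ', List.concat_eq_append, List.prod_append, List.prod_singleton]
    rw [hsplitA, mul_assoc, Module.End.mul_apply, Module.End.mul_apply,
      aux_a q a ad hrel vac hvac n l (k (Fin.last n)), map_sum]
    -- reindex the RHS sum over permutations by `glue`
    rw [← Fintype.sum_bijective _ glue_bijective _
      (fun σ => (q ^ inversions σ * ∏ i, (if k i = l (σ i) then (1 : ℝ) else 0)))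
      (fun p => rfl)]
    rw [Fintype.sum_prod_type, Finset.sum_smul]
    apply Finset.sum_congr rfl
    intro j _
    rw [map_smul,
      ← Module.End.mul_apply ((List.ofFn fun i => a (k (Fin.castSucc i))).prod),
      ih (fun i => k (Fin.castSucc i)) (fun i => l (j.succAbove i)),
      Finset.sum_smul, Finset.smul_sum]
    conv_rhs => rw [Finset.sum_smul]
    apply Finset.sum_congr rfl
    intro τ _
    simp only []
    rw [smul_smul]
    congr 1
    have hprod : (∏ i : Fin (n + 1), (if k i = l ((glue j τ) i) then (1 : ℝ) else 0))
        = (∏ i : Fin n, (if k (Fin.castSucc i) = l (j.succAbove (τ i)) then (1 : ℝ) else 0))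
          * (if k (Fin.last n) = l j then (1 : ℝ) else 0) := by
      rw [Fin.prod_univ_castSucc]
      simp only [glue_castSucc, glue_last]
    rw [hprod, inversions_glue, pow_add]
    split_ifs with h <;> ring
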